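/- Let G ≤ Aut T be a self-similar strongly fractal group which acts transitively on the first level of T, let S ⊆ G, and let K = ⟨S⟩^G be the normal closure of S in G. If K ⊆ st_G(L_1), then for any x ∈ X, ψ_x(K) equals the normal closure in G of the set {ψ_y(s) : s ∈ S, y ∈ X}. -/

import Mathlib

open Equiv

namespace TreeFract

variable {X : Type*}

/-- The automorphism group of the rooted `d`-adic tree with vertex set the free
monoid `List X`: permutations of the vertex set fixing the root and sending
children of a vertex to children of its image (this is exactly incidence
preservation for the rooted tree). -/
def AutT (X : Type*) : Subgroup (Equiv.Perm (List X)) where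
  carrier := {g | g [] = [] ∧ ∀ (u : List X) (x : X), ∃ y : X, g (u ++ [x]) = g u ++ [y]}
  one_mem' := ⟨rfl, fun _ x => ⟨x, rfl⟩⟩
  mul_mem' := by
    rintro f g ⟨hf1, hf2⟩ ⟨hg1, hg2⟩
    refine ⟨?_, fun u x => ?_⟩
    · show f (g []) = []
      rw [hg1, hf1]
    · obtain ⟨y, hy⟩ := hg2 u x
      obtain ⟨z, hz⟩ := hf2 (g u) y
      exact ⟨z, by show f (g (u ++ [x])) = f (g u) ++ [z]; rw [hy, hz]⟩
  inv_mem' := by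
    rintro g ⟨hg1, hg2⟩
    have hinj := g.injective
    refine ⟨?_, fun u x => ?_⟩
    · apply hinj
      show g (g⁻¹ []) = g []
      rw [(show g (g⁻¹ ([])) = [] from Equiv.apply_symm_apply g ([])), hg1]
    · have hne : g⁻¹ (u ++ [x]) ≠ [] := by
        intro h
        have h2 : u ++ [x] = g [] := by
          conv_lhs => rw [← (show g (g⁻¹ (u ++ [x])) = u ++ [x] from Equiv.apply_symm_apply g (u ++ [x])), h]
        rw [hg1] at h2
        simp at h2
      obtain ⟨y, hy⟩ : ∃ y, g⁻¹ (u ++ [x]) = (g⁻¹ (u ++ [x])).dropLast ++ [y] :=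
        ⟨(g⁻¹ (u ++ [x])).getLast hne, (List.dropLast_append_getLast hne).symm⟩
      obtain ⟨z, hz⟩ := hg2 ((g⁻¹ (u ++ [x])).dropLast) y
      have happ : g ((g⁻¹ (u ++ [x])).dropLast) ++ [z] = u ++ [x] := by
        rw [← hz, ← hy, (show g (g⁻¹ (u ++ [x])) = u ++ [x] from Equiv.apply_symm_apply g (u ++ [x]))]
      have h2 : g ((g⁻¹ (u ++ [x])).dropLast) = u ∧ ([z] : List X) = [x] :=
        List.append_inj' happ rfl
      refine ⟨y, ?_⟩
      rw [hy]
      congr 1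
      apply hinj
      rw [(show g (g⁻¹ (u)) = u from Equiv.apply_symm_apply g (u)), h2.1]

/-- The underlying function of the section of `g` at the vertex `u`. -/
def sectFun (g : Equiv.Perm (List X)) (u : List X) : List X → List X :=
  fun v => (g (u ++ v)).drop (g u).length

open scoped Classical in
/-- The section `g_u` of a tree automorphism `g` at a vertex `u`, i.e. the unique
automorphism with `g (u ++ v) = g u ++ g_u v` for all `v`.  (By convention it is
the identity for permutations which are not tree automorphisms.) -/
noncomputable def sect (g : Equiv.Perm (List X)) (u : List X) : Equiv.Perm (List X) :=
  if h : Function.Bijective (sectFun g u) then Equiv.ofBijective _ h else 1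

/-- The underlying function of the label of `g` at the vertex `u`. -/
def labelFun (g : Equiv.Perm (List X)) (u : List X) : X → X :=
  fun x => (g (u ++ [x])).getLastD x

open scoped Classical in
/-- The label `g_(u)` of a tree automorphism `g` at a vertex `u`: the permutation
of `X` with `g (u ++ [x]) = g u ++ [g_(u) x]`.  (By convention it is the identity
for permutations which are not tree automorphisms.) -/
noncomputable def label (g : Equiv.Perm (List X)) (u : List X) : Equiv.Perm X :=
  if h : Function.Bijective (labelFun g u) then Equiv.ofBijective _ h else 1

/-- The stabilizer `st_G(u)` of the vertex `u` in `G`. -/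
def stV (G : Subgroup (Equiv.Perm (List X))) (u : List X) : Subgroup (Equiv.Perm (List X)) where
  carrier := {g | g ∈ G ∧ g u = u}
  one_mem' := ⟨one_mem G, rfl⟩
  mul_mem' := by
    rintro f g ⟨hf, hf2⟩ ⟨hg, hg2⟩
    exact ⟨mul_mem hf hg, by show f (g u) = u; rw [hg2, hf2]⟩
  inv_mem' := by
    rintro g ⟨hg, hg2⟩
    refine ⟨inv_mem hg, ?_⟩
    apply g.injective
    show g (g⁻¹ u) = g u
    rw [(show g (g⁻¹ (u)) = u from Equiv.apply_symm_apply g (u)), hg2]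

/-- The stabilizer `st_G(L_n)` of the `n`-th level in `G`. -/
def stL (G : Subgroup (Equiv.Perm (List X))) (n : ℕ) : Subgroup (Equiv.Perm (List X)) where
  carrier := {g | g ∈ G ∧ ∀ u : List X, u.length = n → g u = u}
  one_mem' := ⟨one_mem G, fun _ _ => rfl⟩
  mul_mem' := by
    rintro f g ⟨hf, hf2⟩ ⟨hg, hg2⟩
    exact ⟨mul_mem hf hg, fun u hu => by show f (g u) = u; rw [hg2 u hu, hf2 u hu]⟩
  inv_mem' := by
    rintro g ⟨hg, hg2⟩
    refine ⟨inv_mem hg, fun u hu => ?_⟩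
    apply g.injective
    show g (g⁻¹ u) = g u
    rw [(show g (g⁻¹ (u)) = u from Equiv.apply_symm_apply g (u)), hg2 u hu]

/-- `G` is self-similar: sections of elements of `G` lie in `G`. -/
def SelfSimilar (G : Subgroup (Equiv.Perm (List X))) : Prop :=
  ∀ g ∈ G, ∀ u : List X, sect g u ∈ G

/-- `G` acts transitively on the first level of the tree. -/
def FirstLevelTransitive (G : Subgroup (Equiv.Perm (List X))) : Prop :=
  ∀ x y : X, ∃ g ∈ G, g [x] = [y]

/-- `G` is level transitive: it acts transitively on every level of the tree. -/
def LevelTransitive (G : Subgroup (Equiv.Perm (List X))) : Prop :=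
  ∀ (n : ℕ) (u v : List X), u.length = n → v.length = n → ∃ g ∈ G, g u = v

/-- `G` is fractal: `ψ_u(st_G(u)) = G` for every vertex `u`. -/
def Fractal (G : Subgroup (Equiv.Perm (List X))) : Prop :=
  ∀ u : List X,
    (fun g => sect g u) '' (stV G u : Set (Equiv.Perm (List X))) = (G : Set (Equiv.Perm (List X)))

/-- `G` is strongly fractal: `ψ_x(st_G(L_1)) = G` for every first-level vertex `x`. -/
def StronglyFractal (G : Subgroup (Equiv.Perm (List X))) : Prop :=
  ∀ x : X,
    (fun g => sect g [x]) '' (stL G 1 : Set (Equiv.Perm (List X))) = (G : Set (Equiv.Perm (List X)))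

/-- `G` is super strongly fractal: `ψ_u(st_G(L_n)) = G` for every `n` and every `u ∈ L_n`. -/
def SuperStronglyFractal (G : Subgroup (Equiv.Perm (List X))) : Prop :=
  ∀ (n : ℕ) (u : List X), u.length = n →
    (fun g => sect g u) '' (stL G n : Set (Equiv.Perm (List X))) = (G : Set (Equiv.Perm (List X)))

/-- The normal closure `⟨S⟩^G` of a subset `S ⊆ G` in the subgroup `G`, realized as a
subgroup of the ambient group: the subgroup generated by all `G`-conjugates of `S`. -/
def normalClosureIn (G : Subgroup (Equiv.Perm (List X))) (S : Set (Equiv.Perm (List X))) :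
    Subgroup (Equiv.Perm (List X)) :=
  Subgroup.closure {t | ∃ g ∈ G, ∃ s ∈ S, t = g * s * g⁻¹}

end TreeFract
namespace TreeFract

/-! ### The Hanoi towers generators -/

section Hanoi

variable {d : ℕ}

/-- The underlying function of the automorphism `a_{ij}` of the Hanoi Towers group:
it swaps the first occurrence of `i` or `j` in a word. -/
def hanoiFun (i j : Fin d) : List (Fin d) → List (Fin d)
  | [] => []
  | x :: w => if x = i then j :: w else if x = j then i :: w else x :: hanoiFun i j w

lemma hanoiFun_invol (i j : Fin d) : ∀ w, hanoiFun i j (hanoiFun i j w) = w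
  | [] => rfl
  | x :: w => by
    by_cases h1 : x = i
    · subst h1
      by_cases h2 : j = x
      · simp [hanoiFun, h2]
      · simp [hanoiFun, h2]
    · by_cases h2 : x = j
      · subst h2
        simp [hanoiFun, h1]
      · simp [hanoiFun, h1, h2, hanoiFun_invol i j w]

/-- The automorphism `a_{ij}` of the `d`-adic tree: its label at the root is the
transposition `(x_i x_j)`, its sections at the first-level vertices `x_i` and `x_j`
are trivial and all its other first-level sections equal `a_{ij}` again. -/
def hanoiA (i j : Fin d) : Equiv.Perm (List (Fin d)) :=
  ⟨hanoiFun i j, hanoiFun i j, hanoiFun_invol i j, hanoiFun_invol i j⟩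

end Hanoi

/-- The generator `b_i = a_{i,i+1}` (here `i` runs through `0, …, d-2`,
corresponding to the paper's `b_1, …, b_{d-1}`). -/
def hanoiB (d : ℕ) (i : ℕ) (h : i + 1 < d) : Equiv.Perm (List (Fin d)) :=
  hanoiA ⟨i, Nat.lt_of_succ_lt h⟩ ⟨i + 1, h⟩

/-- The subgroup `G = ⟨b_1, …, b_{d-1}⟩` of the Hanoi Towers group. -/
def hanoiGroup (d : ℕ) : Subgroup (Equiv.Perm (List (Fin d))) :=
  Subgroup.closure {g | ∃ (i : ℕ) (h : i + 1 < d), g = hanoiB d i h}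

/-! ### GGS groups (and the rooted automorphism `a`) -/

section GGS

variable {p : ℕ}

/-- The function adding `m` to the first letter of a word over `ZMod p`. -/
def rotFun (m : ZMod p) : List (ZMod p) → List (ZMod p)
  | [] => []
  | x :: w => (x + m) :: w

/-- The rooted automorphism of the `p`-adic tree whose label at the root is the
`p`-cycle `x ↦ x + m`; for `m = 1` this is the generator `a` of a GGS-group
(identifying `x_i` with `i mod p`). -/
def rotPerm (m : ZMod p) : Equiv.Perm (List (ZMod p)) :=
  ⟨rotFun m, rotFun (-m),
    by intro w; cases w <;> simp [rotFun],
    by intro w; cases w <;> simp [rotFun]⟩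

/-- The underlying function of the GGS generator `b` with defining vector `e`
(the value `e 0` is irrelevant; `e i` for `i ≠ 0` are the coordinates
`e_1, …, e_{p-1}`): `b` fixes the first level, its section at `x_i` is
`a^{e_i}` for `i = 1, …, p-1` and its section at `x_p` (identified with `0`)
is `b` again. -/
def ggsFun (e : ZMod p → ZMod p) : List (ZMod p) → List (ZMod p)
  | [] => []
  | x :: w => if x = 0 then x :: ggsFun e w else x :: rotFun (e x) w

lemma ggsFun_inv (e : ZMod p → ZMod p) : ∀ w, ggsFun (fun i => -(e i)) (ggsFun e w) = w
  | [] => rfl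
  | x :: w => by
    by_cases h : x = 0
    · simp only [ggsFun, if_pos h]
      rw [ggsFun_inv e w]
    · simp only [ggsFun, if_neg h]
      cases w <;> simp [rotFun]

/-- The GGS generator `b` with defining vector `e`, as a tree automorphism. -/
def ggsB (e : ZMod p → ZMod p) : Equiv.Perm (List (ZMod p)) :=
  ⟨ggsFun e, ggsFun (fun i => -(e i)), ggsFun_inv e, by
    intro w
    have h := ggsFun_inv (fun i => -(e i)) w
    simpa using h⟩

end GGS

/-- The GGS-group `G = ⟨a, b⟩` over the `p`-adic tree with defining vector `e`. -/
def ggsGroup (p : ℕ) (e : ZMod p → ZMod p) : Subgroup (Equiv.Perm (List (ZMod p))) :=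
  Subgroup.closure {rotPerm 1, ggsB e}

/-! ### The first Grigorchuk group -/

/-- The three directed generators `b, c, d` (for `k % 3 = 0, 1, 2` respectively) of the
first Grigorchuk group, defined by the mutual recursion
`b = (a, c)`, `c = (a, d)`, `d = (1, b)` (identifying `x_1` with `0` and `x_2` with `1`). -/
def griFun : ℕ → List (ZMod 2) → List (ZMod 2)
  | _, [] => []
  | k, x :: w => if x = 0 then (if k % 3 = 2 then x :: w else x :: rotFun 1 w)
                 else x :: griFun (k + 1) w

lemma griFun_invol : ∀ (w : List (ZMod 2)) (k : ℕ), griFun k (griFun k w) = w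
  | [], _ => rfl
  | x :: w, k => by
    by_cases h : x = 0
    · by_cases h3 : k % 3 = 2
      · simp [griFun, h, h3]
      · simp only [griFun, if_pos h, if_neg h3]
        cases w with
        | nil => rfl
        | cons y v =>
            have hy : y + 1 + 1 = y := by
              rw [add_assoc]
              simp [show (1 : ZMod 2) + 1 = 0 from rfl]
            simp [rotFun, hy]
    · simp only [griFun, if_neg h]
      rw [griFun_invol w (k + 1)]

/-- The generator `b` of the first Grigorchuk group, with sections `(a, c)`. -/
def griB : Equiv.Perm (List (ZMod 2)) :=
  ⟨griFun 0, griFun 0, fun w => griFun_invol w 0, fun w => griFun_invol w 0⟩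

/-- The generator `c` of the first Grigorchuk group, with sections `(a, d)`. -/
def griC : Equiv.Perm (List (ZMod 2)) :=
  ⟨griFun 1, griFun 1, fun w => griFun_invol w 1, fun w => griFun_invol w 1⟩

/-- The generator `d` of the first Grigorchuk group, with sections `(1, b)`. -/
def griD : Equiv.Perm (List (ZMod 2)) :=
  ⟨griFun 2, griFun 2, fun w => griFun_invol w 2, fun w => griFun_invol w 2⟩

/-- The first Grigorchuk group `𝒢 = ⟨a, b, c, d⟩` acting on the binary tree. -/
def grigorchukGroup : Subgroup (Equiv.Perm (List (ZMod 2))) :=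
  Subgroup.closure {rotPerm 1, griB, griC, griD}

end TreeFract

/-! The section map `ψ_x` is a homomorphism on the stabiliser of `x`, so it maps `K`, generated
by the `G`-conjugates `g s g⁻¹`, onto the subgroup generated by their sections at `x`. If
`g y = x`, the section of `g s g⁻¹` at `x` is the conjugate of `s_y` by `g_y ∈ G`. Conversely,
for `h ∈ G` transitivity gives `f ∈ G` with `f y = x`, and strong fractality an
`m ∈ st_G(L_1)` with `m_x = h f_y⁻¹`; then `m f` moves `y` to `x` and has section `h` there.
So the two generating sets coincide. -/

namespace TreeFract

section SectionCalculus

variable {X : Type*}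

lemma AutT.exists_apply_append {g : Perm (List X)} (hg : g ∈ AutT X) (u v : List X) :
    ∃ w, g (u ++ v) = g u ++ w := by
  induction v using List.reverseRecOn with
  | nil => exact ⟨[], by simp⟩
  | append_singleton v x ih =>
    obtain ⟨w, hw⟩ := ih
    obtain ⟨y, hy⟩ := hg.2 (u ++ v) x
    exact ⟨w ++ [y], by rw [← List.append_assoc, hy, hw, List.append_assoc]⟩

lemma AutT.exists_apply_singleton {g : Perm (List X)} (hg : g ∈ AutT X) (x : X) :
    ∃ y, g [x] = [y] := by
  simpa [hg.1] using hg.2 [] x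

lemma apply_append_eq_sectFun {g : Perm (List X)} (hg : g ∈ AutT X) (u v : List X) :
    g (u ++ v) = g u ++ sectFun g u v := by
  obtain ⟨w, hw⟩ := AutT.exists_apply_append hg u v
  rw [sectFun, hw, List.drop_left]

lemma sectFun_inv_sectFun {g : Perm (List X)} (hg : g ∈ AutT X) (u v : List X) :
    sectFun g⁻¹ (g u) (sectFun g u v) = v := by
  have h := apply_append_eq_sectFun (inv_mem hg) (g u) (sectFun g u v)
  rw [← apply_append_eq_sectFun hg] at h
  simp only [Perm.coe_inv, symm_apply_apply] at h
  exact (List.append_cancel_left h).symm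

lemma sectFun_bijective {g : Perm (List X)} (hg : g ∈ AutT X) (u : List X) :
    Function.Bijective (sectFun g u) := by
  refine ⟨Function.LeftInverse.injective (g := sectFun g⁻¹ (g u)) (sectFun_inv_sectFun hg u),
    Function.RightInverse.surjective (g := sectFun g⁻¹ (g u)) fun v => ?_⟩
  simpa using sectFun_inv_sectFun (inv_mem hg) (g u) v

lemma apply_append_eq_sect {g : Perm (List X)} (hg : g ∈ AutT X) (u v : List X) :
    g (u ++ v) = g u ++ sect g u v := by
  rw [sect, dif_pos (sectFun_bijective hg u), apply_append_eq_sectFun hg]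
  rfl

lemma sect_eq_of_apply_append {g h : Perm (List X)} (hg : g ∈ AutT X) {u : List X}
    (hgh : ∀ v, g (u ++ v) = g u ++ h v) : sect g u = h :=
  Equiv.ext fun v => List.append_cancel_left ((apply_append_eq_sect hg u v).symm.trans (hgh v))

lemma sect_one (u : List X) : sect (1 : Perm (List X)) u = 1 :=
  sect_eq_of_apply_append (one_mem _) fun _ => rfl

lemma sect_mul {f g : Perm (List X)} (hf : f ∈ AutT X) (hg : g ∈ AutT X) (u : List X) :
    sect (f * g) u = sect f (g u) * sect g u :=
  sect_eq_of_apply_append (mul_mem hf hg) fun v => by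
    simp only [Perm.mul_apply, apply_append_eq_sect hg, apply_append_eq_sect hf]

lemma sect_inv {g : Perm (List X)} (hg : g ∈ AutT X) (u : List X) :
    sect g⁻¹ (g u) = (sect g u)⁻¹ := by
  have h := sect_mul (inv_mem hg) hg u
  rw [inv_mul_cancel, sect_one] at h
  exact eq_inv_of_mul_eq_one_left h.symm

lemma sect_conj {g s : Perm (List X)} (hg : g ∈ AutT X) (hs : s ∈ AutT X) {u : List X}
    (hsu : s u = u) : sect (g * s * g⁻¹) (g u) = sect g u * sect s u * (sect g u)⁻¹ := by
  have hu : g⁻¹ (g u) = u := g.symm_apply_apply u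
  rw [sect_mul (mul_mem hg hs) (inv_mem hg), sect_inv hg, hu, sect_mul hg hs, hsu]

noncomputable def sectHom (u : List X) : stV (AutT X) u →* Perm (List X) where
  toFun g := sect g u
  map_one' := sect_one u
  map_mul' f g := by
    simp only [Subgroup.coe_mul]
    rw [sect_mul f.2.1 g.2.1, g.2.2]

lemma image_sect_closure {T : Set (Perm (List X))} {u : List X}
    (hT : T ⊆ stV (AutT X) u) :
    (fun g => sect g u) '' Subgroup.closure T =
      Subgroup.closure ((fun g => sect g u) '' T) := by
  set T' : Set (stV (AutT X) u) := (stV (AutT X) u).subtype ⁻¹' T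
  have hT' : (stV (AutT X) u).subtype '' T' = T := by
    rw [Set.image_preimage_eq_iff, Subgroup.coe_subtype, Subtype.range_coe]
    exact hT
  calc (fun g => sect g u) '' Subgroup.closure T
      = (fun g => sect g u) '' ((Subgroup.closure T').map (stV (AutT X) u).subtype) := by
        rw [MonoidHom.map_closure, hT']
    _ = (Subgroup.closure T').map (sectHom u) := by
        rw [Subgroup.coe_map, Subgroup.coe_map, Set.image_image]
        rfl
    _ = Subgroup.closure ((fun g => sect g u) '' T) := by
        rw [MonoidHom.map_closure, ← hT', Set.image_image]
        rfl

def conjugatesIn (G : Subgroup (Perm (List X))) (S : Set (Perm (List X))) :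
    Set (Perm (List X)) :=
  {t | ∃ g ∈ G, ∃ s ∈ S, t = g * s * g⁻¹}

lemma normalClosureIn_eq_closure (G : Subgroup (Perm (List X))) (S : Set (Perm (List X))) :
    normalClosureIn G S = Subgroup.closure (conjugatesIn G S) :=
  rfl

section Conjugates

variable {G : Subgroup (Perm (List X))} {S : Set (Perm (List X))}

lemma image_sect_conjugatesIn_subset (hG : G ≤ AutT X) (hss : SelfSimilar G)
    (hS : S ⊆ stL G 1) (x : X) :
    (fun g => sect g [x]) '' conjugatesIn G S ⊆
      conjugatesIn G {t | ∃ s ∈ S, ∃ y : X, t = sect s [y]} := by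
  rintro _ ⟨_, ⟨g, hg, s, hs, rfl⟩, rfl⟩
  obtain ⟨y, hy⟩ := AutT.exists_apply_singleton (inv_mem (hG hg)) x
  have hgy : g [y] = [x] := (Perm.inv_eq_iff_eq.mp hy).symm
  refine ⟨sect g [y], hss g hg [y], sect s [y], ⟨s, hs, y, rfl⟩, ?_⟩
  show sect (g * s * g⁻¹) [x] = _
  rw [← hgy, sect_conj (hG hg) (hG (hS hs).1) ((hS hs).2 [y] rfl)]

/-- Strong fractality lets one prescribe the section at `x` of a conjugator moving `y` to `x`. -/
lemma conjugatesIn_subset_image_sect (hG : G ≤ AutT X) (hss : SelfSimilar G)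
    (hsf : StronglyFractal G) (htr : FirstLevelTransitive G) (hS : S ⊆ stL G 1) (x : X) :
    conjugatesIn G {t | ∃ s ∈ S, ∃ y : X, t = sect s [y]} ⊆
      (fun g => sect g [x]) '' conjugatesIn G S := by
  rintro _ ⟨h, hh, _, ⟨s, hs, y, rfl⟩, rfl⟩
  obtain ⟨f, hf, hfy⟩ := htr y x
  obtain ⟨m, hm, hm_sect : sect m [x] = h * (sect f [y])⁻¹⟩ :
      h * (sect f [y])⁻¹ ∈ (fun g => sect g [x]) '' (stL G 1 : Set _) := by
    rw [hsf x]
    exact mul_mem hh (inv_mem (hss f hf [y]))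
  have hmx : m [x] = [x] := hm.2 [x] rfl
  have hmfy : (m * f) [y] = [x] := by rw [Perm.mul_apply, hfy, hmx]
  have hsect : sect (m * f) [y] = h := by
    rw [sect_mul (hG hm.1) (hG hf), hfy, hm_sect, inv_mul_cancel_right]
  refine ⟨m * f * s * (m * f)⁻¹, ⟨m * f, mul_mem hm.1 hf, s, hs, rfl⟩, ?_⟩
  show sect (m * f * s * (m * f)⁻¹) [x] = _
  rw [← hmfy, sect_conj (hG (mul_mem hm.1 hf)) (hG (hS hs).1) ((hS hs).2 [y] rfl), hsect]

end Conjugates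

end SectionCalculus

theorem sect_normalClosure_eq_of_stronglyFractal_general (X : Type*)
    (G : Subgroup (Equiv.Perm (List X))) (hG : G ≤ AutT X) (hss : SelfSimilar G)
    (hsf : StronglyFractal G) (htr : FirstLevelTransitive G)
    (S : Set (Equiv.Perm (List X)))
    (hK : (normalClosureIn G S : Set (Equiv.Perm (List X)))
            ⊆ (stL G 1 : Set (Equiv.Perm (List X)))) :
    ∀ x : X,
      (fun g => sect g [x]) '' (normalClosureIn G S : Set (Equiv.Perm (List X))) =
        (normalClosureIn G {t | ∃ s ∈ S, ∃ y : X, t = sect s [y]} :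
          Set (Equiv.Perm (List X))) := by
  intro x
  have hconj : conjugatesIn G S ⊆ stL G 1 := fun t ht => hK (Subgroup.subset_closure ht)
  have hS : S ⊆ stL G 1 := fun s hs => hconj ⟨1, one_mem G, s, hs, by group⟩
  have hfix : conjugatesIn G S ⊆ stV (AutT X) [x] := fun t ht =>
    ⟨hG (hconj ht).1, (hconj ht).2 [x] rfl⟩
  rw [normalClosureIn_eq_closure, normalClosureIn_eq_closure, image_sect_closure hfix,
    (image_sect_conjugatesIn_subset hG hss hS x).antisymm
      (conjugatesIn_subset_image_sect hG hss hsf htr hS x)]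

/-- Let `G ≤ Aut T` be self-similar, strongly fractal and transitive
on the first level, `S ⊆ G` and `K = ⟨S⟩^G ⊆ st_G(L_1)`.  Then for every `x ∈ X`,
`ψ_x(K)` is the normal closure in `G` of `{ψ_y(s) : s ∈ S, y ∈ X}`. -/
theorem sect_normalClosure_eq_of_stronglyFractal (X : Type*)
    (G : Subgroup (Equiv.Perm (List X))) (hG : G ≤ AutT X) (hss : SelfSimilar G)
    (hsf : StronglyFractal G) (htr : FirstLevelTransitive G)
    (S : Set (Equiv.Perm (List X))) (hSG : S ⊆ (G : Set (Equiv.Perm (List X))))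
    (hK : (normalClosureIn G S : Set (Equiv.Perm (List X)))
            ⊆ (stL G 1 : Set (Equiv.Perm (List X)))) :
    ∀ x : X,
      (fun g => sect g [x]) '' (normalClosureIn G S : Set (Equiv.Perm (List X))) =
        (normalClosureIn G {t | ∃ s ∈ S, ∃ y : X, t = sect s [y]} :
          Set (Equiv.Perm (List X))) :=
  sect_normalClosure_eq_of_stronglyFractal_general X G hG hss hsf htr S hK

end TreeFract
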